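/- In Γ_{n−2}(n) (vertices: (n−1)-element singular subsets of Π_n, adjacency: intersection of size n−2 with singular union), every maximal clique is a top ⟨U] for a maximal singular subset U of size n; in particular every star [S,U] with |S| = n−2 is contained in a top. -/

import Mathlib

/-!
A singular set of size `n` together with its negative covers all `2n` points, so it meets every
pair `{i, -i}`. If a clique contains two distinct vertices `X, Y`, then `U = X ∪ Y` is singular of
size `n`; for any further vertex `Z` and `z ∈ Z`, the singular unions `Z ∪ X`, `Z ∪ Y` keep `-z`
out of `U`, so `z ∈ U`. Hence every clique lies in a top, and a maximal clique is one.
A clique with at most one vertex lies in a top because every singular set extends to one of size `n`.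
-/

open Finset
open scoped Pointwise

/-- The point set J = {±1, …, ±n} of the thin polar space Π_n. -/
noncomputable def polarJ (n : ℕ) : Finset ℤ := (Finset.Icc (-(n : ℤ)) (n : ℤ)).erase 0

/-- A subset of J is singular iff it contains no pair {i, -i}. -/
def Sing (n : ℕ) (S : Finset ℤ) : Prop := S ⊆ polarJ n ∧ ∀ i ∈ S, -i ∉ S

/-- A clique of Γ_{n-2}(n), viewed as a family of (n-1)-element singular subsets. -/
def IsCliqueN (n : ℕ) (C : Set (Finset ℤ)) : Prop :=
  (∀ X ∈ C, Sing n X ∧ X.card = n - 1) ∧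
  ∀ X ∈ C, ∀ Y ∈ C, X ≠ Y → (X ∩ Y).card = n - 2 ∧ Sing n (X ∪ Y)

lemma Finset.card_inter_lt_of_ne {α : Type*} [DecidableEq α] {s t : Finset α} (hne : s ≠ t)
    (hc : s.card = t.card) : (s ∩ t).card < s.card := by
  refine card_lt_card (ssubset_of_subset_of_ne inter_subset_left fun h => hne ?_)
  exact eq_of_subset_of_card_le (h ▸ inter_subset_right) (by omega)

variable {n : ℕ} {X U : Finset ℤ}

lemma mem_polarJ {i : ℤ} : i ∈ polarJ n ↔ i ≠ 0 ∧ -(n : ℤ) ≤ i ∧ i ≤ n := by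
  simp [polarJ]

lemma card_polarJ (n : ℕ) : (polarJ n).card = 2 * n := by
  rw [polarJ, card_erase_of_mem (by simp), Int.card_Icc]
  omega

namespace Sing

lemma mono (hU : Sing n U) (h : X ⊆ U) : Sing n X :=
  ⟨h.trans hU.1, fun i hi hni => hU.2 i (h hi) (h hni)⟩

lemma insert (hX : Sing n X) {c : ℤ} (hc : c ∈ polarJ n) (hnc : -c ∉ X) :
    Sing n (insert c X) := by
  have hc0 : c ≠ 0 := (mem_polarJ.1 hc).1
  refine ⟨insert_subset hc hX.1, fun i hi hni => ?_⟩
  rcases mem_insert.1 hi with rfl | hi <;> rcases mem_insert.1 hni with h | h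
  · omega
  · exact hnc h
  · exact hnc (by rw [← h, neg_neg]; exact hi)
  · exact hX.2 i hi h

lemma union_neg_subset (hX : Sing n X) : X ∪ -X ⊆ polarJ n := by
  refine union_subset hX.1 fun i hi => ?_
  have := mem_polarJ.1 (hX.1 (mem_neg'.1 hi))
  exact mem_polarJ.2 (by omega)

lemma card_union_neg (hX : Sing n X) : (X ∪ -X).card = 2 * X.card := by
  rw [card_union_of_disjoint, card_neg, two_mul]
  exact disjoint_left.2 fun i hi hni => hX.2 i hi (mem_neg'.1 hni)

lemma card_le (hX : Sing n X) : X.card ≤ n := by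
  have := card_le_card hX.union_neg_subset
  rw [hX.card_union_neg, card_polarJ] at this
  omega

lemma mem_or_neg_mem (hU : Sing n U) (hc : U.card = n) {i : ℤ} (hi : i ∈ polarJ n) :
    i ∈ U ∨ -i ∈ U := by
  have hcover : U ∪ -U = polarJ n :=
    eq_of_subset_of_card_le hU.union_neg_subset (by rw [hU.card_union_neg, card_polarJ, hc])
  rw [← hcover, mem_union, mem_neg'] at hi
  exact hi

lemma exists_insert (hX : Sing n X) (hc : X.card < n) :
    ∃ c ∉ X, Sing n (Insert.insert c X) := by
  obtain ⟨c, hcJ, hc⟩ := exists_mem_notMem_of_card_lt_card (s := X ∪ -X) (t := polarJ n)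
    (by rw [hX.card_union_neg, card_polarJ]; omega)
  rw [mem_union, mem_neg', not_or] at hc
  exact ⟨c, hc.1, hX.insert hcJ hc.2⟩

lemma exists_superset (hX : Sing n X) : ∃ U, Sing n U ∧ U.card = n ∧ X ⊆ U := by
  obtain ⟨d, hd⟩ := Nat.exists_eq_add_of_le hX.card_le
  induction d generalizing X with
  | zero => exact ⟨X, hX, hd.symm, subset_rfl⟩
  | succ d ih =>
    obtain ⟨c, hcX, hc⟩ := hX.exists_insert (by omega)
    obtain ⟨U, hU, hUc, hcU⟩ := ih hc (by rw [card_insert_of_notMem hcX]; omega)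
    exact ⟨U, hU, hUc, (subset_insert c X).trans hcU⟩

end Sing

lemma isCliqueN_top (hU : Sing n U) (hc : U.card = n) :
    IsCliqueN n {X | X ⊆ U ∧ X.card = n - 1} := by
  refine ⟨fun X hX => ⟨hU.mono hX.1, hX.2⟩, ?_⟩
  rintro X ⟨hXU, hXc⟩ Y ⟨hYU, hYc⟩ hne
  have hlt := card_inter_lt_of_ne hne (hXc.trans hYc.symm)
  have hsum := card_union_add_card_inter X Y
  have hunion : X ∪ Y = U :=
    eq_of_subset_of_card_le (union_subset hXU hYU) (by omega)
  rw [hunion] at hsum ⊢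
  exact ⟨by omega, hU⟩

namespace IsCliqueN

variable {C : Set (Finset ℤ)}

lemma neg_notMem (hC : IsCliqueN n C) {X Z : Finset ℤ} (hX : X ∈ C) (hZ : Z ∈ C) {z : ℤ}
    (hz : z ∈ Z) : -z ∉ X := by
  by_cases hXZ : X = Z
  · exact hXZ ▸ (hC.1 Z hZ).1.2 z hz
  · exact fun h => (hC.2 X hX Z hZ hXZ).2.2 (-z) (mem_union_left _ h)
      (by rw [neg_neg]; exact mem_union_right _ hz)

lemma subset_top (hC : IsCliqueN n C) :
    ∃ U, Sing n U ∧ U.card = n ∧ C ⊆ {X | X ⊆ U ∧ X.card = n - 1} := by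
  rcases C.subsingleton_or_nontrivial with hsub | ⟨X, hX, Y, hY, hne⟩
  · obtain ⟨X, hX, hCX⟩ : ∃ X, Sing n X ∧ ∀ Z ∈ C, Z = X := by
      rcases C.eq_empty_or_nonempty with rfl | ⟨X, hX⟩
      · exact ⟨∅, ⟨empty_subset _, by simp⟩, by simp⟩
      · exact ⟨X, (hC.1 X hX).1, fun Z hZ => hsub hZ hX⟩
    obtain ⟨U, hU, hUc, hXU⟩ := hX.exists_superset
    exact ⟨U, hU, hUc, fun Z hZ => ⟨hCX Z hZ ▸ hXU, (hC.1 Z hZ).2⟩⟩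
  obtain ⟨hint, hU⟩ := hC.2 X hX Y hY hne
  have hXc := (hC.1 X hX).2
  have hYc := (hC.1 Y hY).2
  have hlt := card_inter_lt_of_ne hne (hXc.trans hYc.symm)
  have hUc : (X ∪ Y).card = n := by
    have := card_union_add_card_inter X Y
    omega
  refine ⟨X ∪ Y, hU, hUc, fun Z hZ => ⟨fun z hz => ?_, (hC.1 Z hZ).2⟩⟩
  refine (hU.mem_or_neg_mem hUc ((hC.1 Z hZ).1.1 hz)).resolve_right ?_
  rw [mem_union, not_or]
  exact ⟨hC.neg_notMem hX hZ hz, hC.neg_notMem hY hZ hz⟩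

end IsCliqueN

theorem stmt12_general (n : ℕ) :
    (∀ C : Set (Finset ℤ),
      IsCliqueN n C → (∀ D : Set (Finset ℤ), IsCliqueN n D → C ⊆ D → C = D) →
      ∃ U : Finset ℤ, Sing n U ∧ U.card = n ∧
        C = {X : Finset ℤ | X ⊆ U ∧ X.card = n - 1}) ∧
    (∀ S U : Finset ℤ, Sing n U → S ⊆ U → S.card = n - 2 → U.card = n →
      ∃ U' : Finset ℤ, Sing n U' ∧ U'.card = n ∧
        {X : Finset ℤ | S ⊆ X ∧ X ⊆ U ∧ X.card = n - 1} ⊆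
          {X : Finset ℤ | X ⊆ U' ∧ X.card = n - 1}) := by
  refine ⟨fun C hC hmax => ?_, fun S U hU _ _ hUc => ⟨U, hU, hUc, fun X hX => hX.2⟩⟩
  obtain ⟨U, hU, hUc, hCU⟩ := hC.subset_top
  exact ⟨U, hU, hUc, hmax _ (isCliqueN_top hU hUc) hCU⟩

/-- In Γ_{n-2}(n), every maximal clique is a top ⟨U] with U maximal singular of size n;
in particular every star [S,U] with |S| = n-2, |U| = n is contained in a top. -/
theorem stmt12 (n : ℕ) (hn : 2 ≤ n) :
    (∀ C : Set (Finset ℤ),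
      IsCliqueN n C → (∀ D : Set (Finset ℤ), IsCliqueN n D → C ⊆ D → C = D) →
      ∃ U : Finset ℤ, Sing n U ∧ U.card = n ∧
        C = {X : Finset ℤ | X ⊆ U ∧ X.card = n - 1}) ∧
    (∀ S U : Finset ℤ, Sing n U → S ⊆ U → S.card = n - 2 → U.card = n →
      ∃ U' : Finset ℤ, Sing n U' ∧ U'.card = n ∧
        {X : Finset ℤ | S ⊆ X ∧ X ⊆ U ∧ X.card = n - 1} ⊆
          {X : Finset ℤ | X ⊆ U' ∧ X.card = n - 1}) :=
  stmt12_general n
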